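/- arXiv:2501.12763 — 2 statements merged into one kernel-verified Lean document; each statement's English description precedes it below -/
import Mathlib

section
/- Let (n_k)_{k≥1} be a super-lacunary sequence of positive integers, i.e. lim_{k→∞} n_{k+1}/n_k = ∞. Then for every fixed d ∈ ℕ there is a constant C = C(d, (n_k)) such that for every N ∈ ℕ and every choice of weights (c_{k,N})_{k≤N} with 0 ≤ c_{k,N} ≤ 1 one has L*(N,d) ≤ C, where L*(N,d) := sup_{c∈ℕ, c>0} Σ_{k,ℓ≤N} Σ_{1≤j,j'≤d} c_{k,N} c_{ℓ,N} 1[j·n_k − j'·n_ℓ = c] + Σ_{k,ℓ≤N, k≠ℓ} Σ_{1≤j,j'≤d} c_{k,N} c_{ℓ,N} 1[j·n_k − j'·n_ℓ = 0]. -/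
open MeasureTheory Filter Real Set Finset

/-- A sequence of positive integers is super-lacunary: n_{k+1}/n_k → ∞. -/
def IsSuperLacunary (n : ℕ → ℕ) : Prop :=
  Filter.Tendsto (fun k => (n (k + 1) : ℝ) / (n k : ℝ)) Filter.atTop Filter.atTop

/-! From some index `K` on, a super-lacunary sequence grows by a factor larger than `2d` at each
step. A solution of `j nₖ = j' nₗ + m` with `j, j' ∈ [1, d]` and both indices `≥ K` is then rigid:
for `m = 0` it forces `k = l`, and for `m > 0` it pins `nₖ` in the window `[m / d, 2m]`, which
contains at most one term of the tail. Hence a solution is determined by `j`, `j'` and the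
truncated indices `min k K`, `min l K`, so each of the two sums counts at most `d² (K + 1)²`
solutions, with weights at most `1`. -/

def HasRatioGap (n : ℕ → ℕ) (r K : ℕ) : Prop :=
  ∀ a b, K ≤ a → a < b → r * n a < n b

theorem IsSuperLacunary.exists_hasRatioGap {n : ℕ → ℕ} (hpos : ∀ k, 0 < n k)
    (h : IsSuperLacunary n) (r : ℕ) : ∃ K, HasRatioGap n r K := by
  obtain ⟨K, hK⟩ := eventually_atTop.1 (h.eventually_ge_atTop ((r + 1 : ℕ) : ℝ))
  have step : ∀ a, K ≤ a → (r + 1) * n a ≤ n (a + 1) := fun a ha => by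
    have := hK a ha
    rw [le_div_iff₀ (by exact_mod_cast hpos a)] at this
    exact_mod_cast this
  refine ⟨K, fun a b ha hab => ?_⟩
  have hgrow : (r + 1) * n a ≤ n b := by
    induction b, hab using Nat.le_induction with
    | base => exact step a ha
    | succ b hab ih =>
      exact ih.trans ((Nat.le_mul_of_pos_left _ (by omega)).trans (step b (by omega)))
  nlinarith [hpos a]

namespace HasRatioGap

variable {n : ℕ → ℕ} {r K : ℕ}

theorem mono (h : HasRatioGap n r K) {s : ℕ} (hsr : s ≤ r) : HasRatioGap n s K :=
  fun a b ha hab => (Nat.mul_le_mul_right _ hsr).trans_lt (h a b ha hab)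

theorem injOn (h : HasRatioGap n r K) (hr : 0 < r) : Set.InjOn n (Set.Ici K) :=
  StrictMonoOn.injOn fun a ha b _ hab =>
    (Nat.le_mul_of_pos_left _ hr).trans_lt (h a b ha hab)

variable {j j' k l : ℕ}

theorem eq_of_mul_eq_mul (h : HasRatioGap n r K) (hj : j ∈ Finset.Icc 1 r)
    (hj' : j' ∈ Finset.Icc 1 r) (hk : K ≤ k) (hl : K ≤ l) (he : j * n k = j' * n l) : k = l := by
  rw [Finset.mem_Icc] at hj hj'
  rcases lt_trichotomy k l with hkl | hkl | hkl
  · have := h k l hk hkl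
    nlinarith [Nat.mul_le_mul_right (n k) hj.2, Nat.mul_le_mul_right (n l) hj'.1]
  · exact hkl
  · have := h l k hl hkl
    nlinarith [Nat.mul_le_mul_right (n k) hj.1, Nat.mul_le_mul_right (n l) hj'.2]

theorem le_two_mul_of_mul_eq_mul_add (h : HasRatioGap n (2 * r) K) (hj : j ∈ Finset.Icc 1 r)
    (hj' : j' ∈ Finset.Icc 1 r) (hk : K ≤ k) (hl : K ≤ l) {m : ℕ} (hm : 0 < m)
    (he : j * n k = j' * n l + m) : n k ≤ 2 * m := by
  rw [Finset.mem_Icc] at hj hj'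
  have hjk : n k ≤ j * n k := Nat.le_mul_of_pos_left _ hj.1
  rcases lt_trichotomy k l with hkl | rfl | hkl
  · have := h k l hk hkl
    nlinarith [Nat.mul_le_mul_right (n k) hj.2, Nat.mul_le_mul_right (n l) hj'.1]
  · have hjj : j' + 1 ≤ j := by
      by_contra! hjj
      nlinarith [Nat.mul_le_mul_right (n k) (Nat.le_of_lt_succ hjj)]
    nlinarith [Nat.mul_le_mul_right (n k) hjj]
  · have := h l k hl hkl
    nlinarith [Nat.mul_le_mul_right (n l) hj'.2]

theorem fst_eq_of_mul_eq_mul_add (h : HasRatioGap n (2 * r) K) {i i' k' l' m : ℕ}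
    (hj : j ∈ Finset.Icc 1 r) (hj' : j' ∈ Finset.Icc 1 r)
    (hi : i ∈ Finset.Icc 1 r) (hi' : i' ∈ Finset.Icc 1 r)
    (hk : K ≤ k) (hl : K ≤ l) (hk' : K ≤ k') (hl' : K ≤ l') (hm : 0 < m)
    (he : j * n k = j' * n l + m) (he' : i * n k' = i' * n l' + m) : k = k' := by
  have hup := h.le_two_mul_of_mul_eq_mul_add hj hj' hk hl hm he
  have hup' := h.le_two_mul_of_mul_eq_mul_add hi hi' hk' hl' hm he'
  have hlow : m ≤ r * n k := by nlinarith [Nat.mul_le_mul_right (n k) (Finset.mem_Icc.1 hj).2]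
  have hlow' : m ≤ r * n k' := by nlinarith [Nat.mul_le_mul_right (n k') (Finset.mem_Icc.1 hi).2]
  rcases lt_trichotomy k k' with hkk | hkk | hkk
  · have := h k k' hk hkk
    rw [mul_assoc] at this
    omega
  · exact hkk
  · have := h k' k hk' hkk
    rw [mul_assoc] at this
    omega

theorem injOn_min (h : HasRatioGap n (2 * r) K) (hj : j ∈ Finset.Icc 1 r)
    (hj' : j' ∈ Finset.Icc 1 r) (m : ℕ) :
    Set.InjOn (fun p : ℕ × ℕ => (min p.1 K, min p.2 K))
      {p | j * n p.1 = j' * n p.2 + m ∧ (m = 0 → p.1 ≠ p.2)} := by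
  rintro ⟨k, l⟩ ⟨he, hne⟩ ⟨k', l'⟩ ⟨he', -⟩ hmin
  simp only [Prod.mk.injEq] at hmin he he' hne ⊢
  obtain ⟨hkk, hll⟩ := hmin
  have hj1 := (Finset.mem_Icc.1 hj).1
  have hinj := h.injOn (by linarith [(Finset.mem_Icc.1 hj).2])
  have hk : k = k' := by
    rcases lt_or_ge k K with hkK | hkK
    · omega
    rcases lt_or_ge l K with hlK | hlK
    · obtain rfl : l = l' := by omega
      exact hinj hkK (show K ≤ k' by omega) (Nat.eq_of_mul_eq_mul_left hj1 (by omega))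
    rcases Nat.eq_zero_or_pos m with rfl | hm
    · exact absurd ((h.mono (by omega)).eq_of_mul_eq_mul hj hj' hkK hlK he) (hne rfl)
    · exact h.fst_eq_of_mul_eq_mul_add hj hj' hj hj' hkK hlK (by omega) (by omega) hm he he'
  subst hk
  refine ⟨rfl, ?_⟩
  rcases lt_or_ge l K with hlK | hlK
  · omega
  · exact hinj hlK (show K ≤ l' by omega)
      (Nat.eq_of_mul_eq_mul_left (Finset.mem_Icc.1 hj').1 (by omega))

theorem card_le (h : HasRatioGap n (2 * r) K) (hj : j ∈ Finset.Icc 1 r)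
    (hj' : j' ∈ Finset.Icc 1 r) {m : ℕ} {s : Finset (ℕ × ℕ)}
    (hs : ∀ p ∈ s, j * n p.1 = j' * n p.2 + m ∧ (m = 0 → p.1 ≠ p.2)) :
    #s ≤ (K + 1) ^ 2 := by
  calc #s ≤ #(range (K + 1) ×ˢ range (K + 1)) :=
        card_le_card_of_injOn _
          (fun p _ => by simp only [coe_product, coe_range, Set.mem_prod, Set.mem_Iio]; omega)
          ((h.injOn_min hj hj' m).mono fun p hp => hs p hp)
    _ = (K + 1) ^ 2 := by rw [card_product, card_range, sq]

end HasRatioGap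

theorem sum_weighted_indicator_le (s t : Finset ℕ) {c : ℕ → ℝ} (hc : ∀ k, 0 ≤ c k ∧ c k ≤ 1)
    (P : ℕ → ℕ → ℕ → ℕ → Prop) [∀ k l j j', Decidable (P k l j j')] {B : ℕ}
    (hB : ∀ j ∈ t, ∀ j' ∈ t, #{p ∈ s ×ˢ s | P p.1 p.2 j j'} ≤ B) :
    ∑ k ∈ s, ∑ l ∈ s, ∑ j ∈ t, ∑ j' ∈ t, c k * c l * (if P k l j j' then 1 else 0)
      ≤ #t * #t * B := by
  calc _ ≤ ∑ k ∈ s, ∑ l ∈ s, ∑ j ∈ t, ∑ j' ∈ t, (if P k l j j' then 1 else 0 : ℝ) := by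
        gcongr with k _ l _ j _ j' _
        split_ifs
        · nlinarith [hc k, hc l]
        · simp
    _ = ∑ j ∈ t, ∑ j' ∈ t, (#{p ∈ s ×ˢ s | P p.1 p.2 j j'} : ℝ) := by
        rw [← sum_product', sum_comm]
        refine sum_congr rfl fun j _ => ?_
        rw [sum_comm]
        simp only [sum_boole]
    _ ≤ ∑ j ∈ t, ∑ j' ∈ t, (B : ℝ) := by
        gcongr with j hj j' hj'
        exact_mod_cast hB j hj j' hj'
    _ = #t * #t * B := by simp [mul_assoc]

theorem superlacunary_bounded_diophantine
    (n : ℕ → ℕ) (hpos : ∀ k, 0 < n k) (hsuper : IsSuperLacunary n) (d : ℕ) :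
    ∃ C : ℝ, ∀ N : ℕ, ∀ c : ℕ → ℝ, (∀ k, 0 ≤ c k ∧ c k ≤ 1) →
      ∀ m : ℕ, 0 < m →
        (∑ k ∈ Finset.Icc 1 N, ∑ l ∈ Finset.Icc 1 N,
          ∑ j ∈ Finset.Icc 1 d, ∑ j' ∈ Finset.Icc 1 d,
            c k * c l * (if (j : ℤ) * n k - (j' : ℤ) * n l = (m : ℤ) then 1 else 0)) +
        (∑ k ∈ Finset.Icc 1 N, ∑ l ∈ Finset.Icc 1 N,
          ∑ j ∈ Finset.Icc 1 d, ∑ j' ∈ Finset.Icc 1 d,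
            c k * c l * (if k ≠ l ∧ (j : ℤ) * n k - (j' : ℤ) * n l = 0 then 1 else 0))
        ≤ C := by
  obtain ⟨K, hK⟩ := hsuper.exists_hasRatioGap hpos (2 * d)
  refine ⟨2 * (d * d * (K + 1) ^ 2 : ℕ), fun N c hc m hm => ?_⟩
  have hinhom := sum_weighted_indicator_le (Icc 1 N) (Icc 1 d) hc
    (fun k l j j' => (j : ℤ) * n k - (j' : ℤ) * n l = (m : ℤ)) fun j hj j' hj' =>
    hK.card_le hj hj' (m := m) fun p hp => by
      have he := (mem_filter.1 hp).2
      rw [sub_eq_iff_eq_add'] at he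
      exact ⟨by exact_mod_cast he, by omega⟩
  have hhom := sum_weighted_indicator_le (Icc 1 N) (Icc 1 d) hc
    (fun k l j j' => k ≠ l ∧ (j : ℤ) * n k - (j' : ℤ) * n l = 0) fun j hj j' hj' =>
    hK.card_le hj hj' (m := 0) fun p hp => by
      obtain ⟨hne, he⟩ := (mem_filter.1 hp).2
      rw [sub_eq_zero] at he
      exact ⟨by exact_mod_cast he, fun _ => hne⟩
  rw [Nat.card_Icc, Nat.add_sub_cancel] at hinhom hhom
  push_cast at hinhom hhom ⊢
  linarith
end

section
/- Let q > 1 and let (n_k)_{k≥1} be a sequence of positive integers with n_{k+1}/n_k ≥ q for all k. Let p(x) = Σ_{j=1}^d a_j cos(2πjx) be an even trigonometric polynomial of degree d. Then there is a constant C = C(p, q, d) such that for every finite set Δ of positive integers and all weights (c_k)_{k∈Δ} with 0 ≤ c_k ≤ 1, ∫₀¹ (Σ_{k∈Δ} c_k p(n_k x))⁴ dx ≤ C·(Σ_{k∈Δ} c_k²)². -/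
open MeasureTheory Finset Real Set

/-- The even trigonometric polynomial p(x) = Σ_{j=1}^d a_j cos(2πjx). -/
noncomputable def trigPoly (d : ℕ) (a : ℕ → ℝ) (x : ℝ) : ℝ :=
  ∑ j ∈ Finset.Icc 1 d, a j * Real.cos (2 * Real.pi * j * x)

/-!
Expanding the fourth power and using
`cos θ₀ cos θ₁ cos θ₂ cos θ₃ = 2⁻⁴ ∑_{s ∈ {±1}⁴} cos (∑ sᵢ θᵢ)`, the integral becomes
`2⁻⁴ ∑_s ∑_p ∏ᵢ c_{kᵢ} a_{jᵢ}`, the inner sum running over the tuples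
`p = ((k₀, j₀), …, (k₃, j₃))` with `∑ sᵢ jᵢ n_{kᵢ} = 0`. In such a tuple the largest frequency
is at most the sum of the other three, so the two largest indices satisfy
`n_{k_max} ≤ 3d n_{k_second}`, and the gap condition gives `k_max - k_second ≤ L` with
`3d ≤ q^L`. By AM–GM, `∏ c_{kᵢ}` is at most the mean of `c_{k_max}² c_{k'}²` and
`c_{k_second}² c_{k''}²`, where `k'`, `k''` are the two remaining indices. Once `k_max`, `k'` and
the four harmonics are fixed, `k_second` has at most `2L + 1` values and the vanishing signed
sum determines the last index, so each of these sums is at most `(2L + 1) d⁴ (∑ c_k²)²`.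
-/

theorem prod_cos_eq_sum_cos {ι : Type*} [Fintype ι] [DecidableEq ι] (θ : ι → ℝ) :
    ∏ i, cos (θ i) = (2 ^ Fintype.card ι)⁻¹ * ∑ s : ι → ℤˣ, cos (∑ i, (s i : ℝ) * θ i) := by
  have hcos (t : ℝ) :
      (cos t : ℂ) = 2⁻¹ * ∑ u : ℤˣ, Complex.exp (((u : ℝ) * t : ℝ) * Complex.I) := by
    simp only [UnitsInt.univ, sum_insert (by decide : (1 : ℤˣ) ∉ ({-1} : Finset ℤˣ)),
      sum_singleton, Complex.ofReal_cos, Complex.cos]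
    push_cast
    ring_nf
  have h : ((∏ i, cos (θ i) : ℝ) : ℂ) = (2 ^ Fintype.card ι)⁻¹ *
      ∑ s : ι → ℤˣ, Complex.exp ((∑ i, (s i : ℝ) * θ i : ℝ) * Complex.I) := by
    simp only [Complex.ofReal_prod, hcos, prod_mul_distrib, Fintype.prod_sum,
      prod_const, card_univ, inv_pow, Complex.ofReal_sum, sum_mul,
      Complex.exp_sum]
  have := congrArg Complex.re h
  rw [Complex.ofReal_re] at this
  rw [this, ← Complex.ofReal_ofNat, ← Complex.ofReal_pow, ← Complex.ofReal_inv,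
    Complex.re_ofReal_mul, Complex.re_sum]
  simp only [Complex.exp_ofReal_mul_I_re]

theorem integral_cos_two_pi_int_mul (N : ℤ) :
    ∫ x in (0 : ℝ)..1, cos (2 * π * N * x) = if N = 0 then 1 else 0 := by
  split_ifs with hN
  · simp [hN]
  · have h : 2 * π * (N : ℝ) ≠ 0 := by positivity
    rw [intervalIntegral.integral_comp_mul_left (fun y => cos y) h, integral_cos]
    have hsin : sin (2 * π * N) = 0 := by
      rw [show 2 * π * N = ((2 * N : ℤ) : ℝ) * π by push_cast; ring]
      exact sin_int_mul_pi _
    simp [hsin]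

theorem integral_prod_cos {ι : Type*} [Fintype ι] [DecidableEq ι] (m : ι → ℤ) :
    ∫ x in (0 : ℝ)..1, ∏ i, cos (2 * π * m i * x) =
      (2 ^ Fintype.card ι)⁻¹ * #{s : ι → ℤˣ | ∑ i, (s i : ℤ) * m i = 0} := by
  have hfreq : ∀ (s : ι → ℤˣ) (x : ℝ), ∑ i, (s i : ℝ) * (2 * π * m i * x) =
      2 * π * ((∑ i, (s i : ℤ) * m i : ℤ) : ℝ) * x := by
    intro s x
    push_cast
    rw [mul_sum, sum_mul]
    exact sum_congr rfl fun i _ => by ring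
  simp only [prod_cos_eq_sum_cos, hfreq, intervalIntegral.integral_const_mul]
  rw [intervalIntegral.integral_finsetSum fun s _ =>
    (by fun_prop : Continuous _).intervalIntegrable 0 1]
  simp only [integral_cos_two_pi_int_mul, sum_boole]

theorem integral_pow_sum_cos {α : Type*} (E : Finset α) (b : α → ℝ) (m : α → ℤ) (r : ℕ) :
    ∫ x in (0 : ℝ)..1, (∑ e ∈ E, b e * cos (2 * π * m e * x)) ^ r =
      (2 ^ r)⁻¹ * ∑ s : Fin r → ℤˣ,
        ∑ p ∈ Fintype.piFinset (fun _ => E) with ∑ i, (s i : ℤ) * m (p i) = 0, ∏ i, b (p i) := by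
  simp only [sum_pow', prod_mul_distrib]
  rw [intervalIntegral.integral_finsetSum fun p _ =>
    (by fun_prop : Continuous _).intervalIntegrable 0 1]
  simp only [intervalIntegral.integral_const_mul, integral_prod_cos, Fintype.card_fin,
    card_filter, Nat.cast_sum, Nat.cast_ite, Nat.cast_one, Nat.cast_zero,
    mul_sum, sum_filter]
  rw [sum_comm]
  refine sum_congr rfl fun s _ => sum_congr rfl fun p _ => ?_
  split_ifs <;> ring

theorem sum_comp_le_mul_sum {α β : Type*} [DecidableEq β] {Z : Finset α} {Y : Finset β}
    {Φ : α → β} {F : β → ℝ} {M : ℕ} (hmaps : ∀ p ∈ Z, Φ p ∈ Y) (hF : ∀ y ∈ Y, 0 ≤ F y)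
    (hfiber : ∀ y ∈ Y, #{p ∈ Z | Φ p = y} ≤ M) :
    ∑ p ∈ Z, F (Φ p) ≤ M * ∑ y ∈ Y, F y := by
  rw [← sum_fiberwise_of_maps_to hmaps, mul_sum]
  gcongr with y hy
  rw [sum_congr rfl fun p hp => by rw [(mem_filter.1 hp).2], sum_const, nsmul_eq_mul]
  gcongr
  · exact hF y hy
  · exact_mod_cast hfiber y hy

theorem sum_le_sum_sum_filter_of_exists {α β : Type*} [Fintype β] {Z : Finset α}
    {P : β → α → Prop} [∀ σ, DecidablePred (P σ)] {w : α → ℝ} {v : β → α → ℝ}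
    (hv : ∀ σ p, 0 ≤ v σ p) (h : ∀ p ∈ Z, ∃ σ, P σ p ∧ w p ≤ v σ p) :
    ∑ p ∈ Z, w p ≤ ∑ σ, ∑ p ∈ Z with P σ p, v σ p := by
  simp only [sum_filter]
  rw [sum_comm]
  refine sum_le_sum fun p hp => ?_
  obtain ⟨σ, hσ, hle⟩ := h p hp
  refine hle.trans ?_
  calc v σ p = if P σ p then v σ p else 0 := (if_pos hσ).symm
    _ ≤ ∑ τ, if P τ p then v τ p else 0 :=
      single_le_sum (f := fun τ => if P τ p then v τ p else 0)
        (fun τ _ => by split_ifs <;> simp [hv]) (mem_univ σ)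

theorem prod_mul_le_pow_card_mul_prod {ι : Type*} [Fintype ι] {x y : ι → ℝ} {A : ℝ}
    (hx : ∀ i, 0 ≤ x i) (hy : ∀ i, |y i| ≤ A) :
    ∏ i, x i * y i ≤ A ^ Fintype.card ι * ∏ i, x i :=
  calc ∏ i, x i * y i ≤ ∏ i, |x i * y i| := (le_abs_self _).trans (abs_prod _ _).le
    _ ≤ ∏ i, A * x i := by
        refine prod_le_prod (fun i _ => abs_nonneg _) fun i _ => ?_
        rw [abs_mul, abs_of_nonneg (hx i), mul_comm A]
        exact mul_le_mul_of_nonneg_left (hy i) (hx i)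
    _ = A ^ Fintype.card ι * ∏ i, x i := by rw [prod_mul_distrib, prod_const, card_univ]

section Lacunary

variable {q : ℝ} {n : ℕ → ℕ}

theorem pow_sub_mul_le_of_gap (hq : 0 ≤ q) (hgap : ∀ k, q * (n k : ℝ) ≤ (n (k + 1) : ℝ))
    {k l : ℕ} (hkl : k ≤ l) : q ^ (l - k) * n k ≤ n l := by
  induction l, hkl using Nat.le_induction with
  | base => simp
  | succ l hkl ih =>
    calc q ^ (l + 1 - k) * n k = q * (q ^ (l - k) * n k) := by
          rw [Nat.sub_add_comm hkl, pow_succ]; ring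
      _ ≤ q * n l := by gcongr
      _ ≤ n (l + 1) := hgap l

theorem strictMono_of_gap (hq : 1 < q) (hpos : ∀ k, 0 < n k)
    (hgap : ∀ k, q * (n k : ℝ) ≤ (n (k + 1) : ℝ)) : StrictMono n := by
  refine strictMono_nat_of_lt_succ fun k => ?_
  have : (n k : ℝ) < n (k + 1) :=
    (lt_mul_of_one_lt_left (by exact_mod_cast hpos k) hq).trans_le (hgap k)
  exact_mod_cast this

theorem le_add_of_le_mul_of_gap (hq : 1 < q) (hpos : ∀ k, 0 < n k)
    (hgap : ∀ k, q * (n k : ℝ) ≤ (n (k + 1) : ℝ)) {K : ℝ} {L k l : ℕ} (hL : K ≤ q ^ L)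
    (hkl : k ≤ l) (h : (n l : ℝ) ≤ K * n k) : l ≤ k + L := by
  have hnk : (0 : ℝ) < n k := by exact_mod_cast hpos k
  have : q ^ (l - k) ≤ q ^ L := by
    refine le_of_mul_le_mul_right ?_ hnk
    calc q ^ (l - k) * n k ≤ n l := pow_sub_mul_le_of_gap (by linarith) hgap hkl
      _ ≤ K * n k := h
      _ ≤ q ^ L * n k := by gcongr
  have := (pow_le_pow_iff_right₀ hq).1 this
  omega

end Lacunary

/-- The terms of the expansion are indexed by pairs `e = (k, j)`: this is the frequency of
`cos (2π j n_k x)`. -/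
def harmonicFreq (n : ℕ → ℕ) (e : ℕ × ℕ) : ℤ := e.2 * n e.1

theorem sum_mul_trigPoly_eq (n : ℕ → ℕ) (d : ℕ) (a : ℕ → ℝ) (Δ : Finset ℕ) (c : ℕ → ℝ) (x : ℝ) :
    ∑ k ∈ Δ, c k * trigPoly d a (n k * x) =
      ∑ e ∈ Δ ×ˢ Finset.Icc 1 d, c e.1 * a e.2 * cos (2 * π * harmonicFreq n e * x) := by
  simp only [sum_product, trigPoly, mul_sum]
  refine sum_congr rfl fun k _ => sum_congr rfl fun j _ => ?_
  rw [harmonicFreq, ← mul_assoc]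
  push_cast
  ring_nf

section SignedSums

variable {ι : Type*} [Fintype ι] [DecidableEq ι]

theorem abs_le_sum_abs_of_signed_sum_eq_zero (s : ι → ℤˣ) (m : ι → ℤ)
    (h : ∑ i, (s i : ℤ) * m i = 0) (i₀ : ι) : |m i₀| ≤ ∑ i ∈ univ.erase i₀, |m i| := by
  have hs : ∀ i, |(s i : ℤ)| = 1 := fun i => Int.isUnit_iff_abs_eq.mp (s i).isUnit
  rw [← add_sum_erase _ _ (mem_univ i₀), add_eq_zero_iff_eq_neg] at h
  calc |m i₀| = |(s i₀ : ℤ) * m i₀| := by rw [abs_mul, hs, one_mul]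
    _ = |∑ i ∈ univ.erase i₀, (s i : ℤ) * m i| := by rw [h, abs_neg]
    _ ≤ ∑ i ∈ univ.erase i₀, |(s i : ℤ) * m i| := abs_sum_le_sum_abs _ _
    _ = ∑ i ∈ univ.erase i₀, |m i| := by simp only [abs_mul, hs, one_mul]

theorem eq_of_signed_sum_harmonicFreq_eq {n : ℕ → ℕ} (hn : Function.Injective n) (s : ι → ℤˣ)
    {p p' : ι → ℕ × ℕ} {i₀ : ι}
    (h : ∑ i, (s i : ℤ) * harmonicFreq n (p i) = ∑ i, (s i : ℤ) * harmonicFreq n (p' i))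
    (hne : ∀ i, i ≠ i₀ → p i = p' i) (hj : (p i₀).2 = (p' i₀).2) (hj₀ : (p i₀).2 ≠ 0) :
    p = p' := by
  rw [← add_sum_erase _ _ (mem_univ i₀), ← add_sum_erase _ _ (mem_univ i₀),
    sum_congr rfl fun i hi => by rw [hne i (ne_of_mem_erase hi)], add_left_inj,
    mul_right_inj' (Units.ne_zero _)] at h
  have hk : n (p i₀).1 = n (p' i₀).1 := by
    simp only [harmonicFreq, hj] at h
    exact_mod_cast mul_left_cancel₀ (by exact_mod_cast hj ▸ hj₀) h
  funext i
  by_cases hi : i = i₀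
  · subst hi; exact Prod.ext (hn hk) hj
  · exact hne i hi

end SignedSums

theorem exists_perm_top_two_close {q : ℝ} {n : ℕ → ℕ} (hq : 1 < q) (hpos : ∀ k, 0 < n k)
    (hgap : ∀ k, q * (n k : ℝ) ≤ (n (k + 1) : ℝ)) {d L : ℕ} (hL : (3 * d : ℝ) ≤ q ^ L)
    (s : Fin 4 → ℤˣ) {p : Fin 4 → ℕ × ℕ} (hj : ∀ i, (p i).2 ∈ Finset.Icc 1 d)
    (hsum : ∑ i, (s i : ℤ) * harmonicFreq n (p i) = 0) :
    ∃ σ : Equiv.Perm (Fin 4), (p (σ 2)).1 ≤ (p (σ 3)).1 ∧ (p (σ 3)).1 ≤ (p (σ 2)).1 + L := by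
  set σ := Tuple.sort fun i => (p i).1
  have hsorted : Monotone fun i => (p (σ i)).1 := Tuple.monotone_sort fun i => (p i).1
  have hn := (strictMono_of_gap hq hpos hgap).monotone
  have hlower : ∀ i ∈ univ.erase (σ 3), |harmonicFreq n (p i)| ≤ d * n (p (σ 2)).1 := by
    intro i hi
    have hi2 : σ.symm i ≤ 2 := by
      have : σ.symm i ≠ 3 := fun h => ne_of_mem_erase hi (by rw [← h, Equiv.apply_symm_apply])
      omega
    have hk : (p i).1 ≤ (p (σ 2)).1 := by simpa using hsorted hi2
    rw [harmonicFreq, abs_of_nonneg (by positivity)]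
    exact_mod_cast Nat.mul_le_mul (mem_Icc.1 (hj i)).2 (hn hk)
  have htop : (n (p (σ 3)).1 : ℤ) ≤ 3 * d * n (p (σ 2)).1 :=
    calc (n (p (σ 3)).1 : ℤ) ≤ |harmonicFreq n (p (σ 3))| := by
          rw [harmonicFreq, abs_of_nonneg (by positivity)]
          exact le_mul_of_one_le_left (by positivity) (by exact_mod_cast (mem_Icc.1 (hj _)).1)
      _ ≤ ∑ i ∈ univ.erase (σ 3), |harmonicFreq n (p i)| :=
          abs_le_sum_abs_of_signed_sum_eq_zero s _ hsum _
      _ ≤ #(univ.erase (σ 3)) • (d * n (p (σ 2)).1 : ℤ) := sum_le_card_nsmul _ _ _ hlower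
      _ = 3 * d * n (p (σ 2)).1 := by simp [mul_assoc]
  have h23 : (p (σ 2)).1 ≤ (p (σ 3)).1 := hsorted (by decide : (2 : Fin 4) ≤ 3)
  exact ⟨σ, h23, le_add_of_le_mul_of_gap hq hpos hgap hL h23 (by exact_mod_cast htop)⟩

theorem sum_sq_mul_sq_le_of_close {ι : Type*} [Fintype ι] [DecidableEq ι] {n : ℕ → ℕ}
    (hn : Function.Injective n) (s : ι → ℤˣ) {a a' b b' : ι}
    (hcover : ∀ i, i ≠ b' → i = a ∨ i = a' ∨ i = b) (Δ : Finset ℕ) (c : ℕ → ℝ) (d L : ℕ)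
    (Z : Finset (ι → ℕ × ℕ))
    (hZ : ∀ p ∈ Z, (∀ i, p i ∈ Δ ×ˢ Finset.Icc 1 d) ∧
      ∑ i, (s i : ℤ) * harmonicFreq n (p i) = 0 ∧ (p a').1 ≤ (p a).1 + L ∧ (p a).1 ≤ (p a').1 + L) :
    ∑ p ∈ Z, c (p a).1 ^ 2 * c (p b).1 ^ 2 ≤
      ((2 * L + 1) * d ^ Fintype.card ι : ℕ) * (∑ k ∈ Δ, c k ^ 2) ^ 2 := by
  have hmem : ∀ p ∈ Z, ∀ i, (p i).1 ∈ Δ ∧ (p i).2 ∈ Finset.Icc 1 d :=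
    fun p hp i => mem_product.1 ((hZ p hp).1 i)
  rw [sq (∑ k ∈ Δ, c k ^ 2), sum_mul_sum, ← sum_product']
  refine sum_comp_le_mul_sum (Φ := fun p => ((p a).1, (p b).1))
    (F := fun y => c y.1 ^ 2 * c y.2 ^ 2)
    (fun p hp => mem_product.2 ⟨(hmem p hp a).1, (hmem p hp b).1⟩) (fun y _ => by positivity)
    fun y _ => ?_
  calc #{p ∈ Z | ((p a).1, (p b).1) = y}
      ≤ #(Finset.Icc (y.1 - L) (y.1 + L) ×ˢ Fintype.piFinset fun _ : ι => Finset.Icc 1 d) := by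
        refine card_le_card_of_injOn (fun p => ((p a').1, fun i => (p i).2)) ?_ ?_
        · intro p hp
          obtain ⟨hpZ, rfl⟩ := mem_filter.1 hp
          have := (hZ p hpZ).2.2
          simp only [coe_product, Set.mem_prod, mem_coe, Finset.mem_Icc, Fintype.mem_piFinset]
          exact ⟨by omega, fun i => mem_Icc.1 (hmem p hpZ i).2⟩
        · intro p hp p' hp' heq
          obtain ⟨hpZ, hpy⟩ := mem_filter.1 hp
          obtain ⟨hpZ', hpy'⟩ := mem_filter.1 hp'
          obtain ⟨hka', hj⟩ := Prod.ext_iff.1 heq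
          obtain ⟨hka, hkb⟩ := Prod.ext_iff.1 (hpy.trans hpy'.symm)
          refine eq_of_signed_sum_harmonicFreq_eq hn s (i₀ := b')
            ((hZ p hpZ).2.1.trans (hZ p' hpZ').2.1.symm) (fun i hi => ?_) (congrFun hj b')
            (by have := (mem_Icc.1 (hmem p hpZ b').2).1; omega)
          rcases hcover i hi with rfl | rfl | rfl
          · exact Prod.ext hka (congrFun hj _)
          · exact Prod.ext hka' (congrFun hj _)
          · exact Prod.ext hkb (congrFun hj _)
    _ ≤ (2 * L + 1) * d ^ Fintype.card ι := by
        simp only [card_product, Nat.card_Icc, Fintype.card_piFinset, prod_const, card_univ,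
          Nat.add_sub_cancel]
        gcongr
        omega

theorem sum_prod_le_of_signed_sum_eq_zero {q : ℝ} {n : ℕ → ℕ} (hq : 1 < q)
    (hpos : ∀ k, 0 < n k) (hgap : ∀ k, q * (n k : ℝ) ≤ (n (k + 1) : ℝ)) {d L : ℕ}
    (hL : (3 * d : ℝ) ≤ q ^ L) (Δ : Finset ℕ) (c : ℕ → ℝ) (s : Fin 4 → ℤˣ) :
    ∑ p ∈ Fintype.piFinset (fun _ => Δ ×ˢ Finset.Icc 1 d)
        with ∑ i, (s i : ℤ) * harmonicFreq n (p i) = 0, ∏ i, c (p i).1 ≤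
      24 * (((2 * L + 1) * d ^ 4 : ℕ) * (∑ k ∈ Δ, c k ^ 2) ^ 2) := by
  set B := (((2 * L + 1) * d ^ 4 : ℕ) : ℝ) * (∑ k ∈ Δ, c k ^ 2) ^ 2
  set Z := {p ∈ Fintype.piFinset (fun _ : Fin 4 => Δ ×ˢ Finset.Icc 1 d) |
    ∑ i, (s i : ℤ) * harmonicFreq n (p i) = 0}
  have hn := (strictMono_of_gap hq hpos hgap).injective
  have hZ : ∀ (σ : Equiv.Perm (Fin 4)),
      ∀ p ∈ {p ∈ Z | (p (σ 3)).1 ≤ (p (σ 2)).1 + L ∧ (p (σ 2)).1 ≤ (p (σ 3)).1 + L},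
        (∀ i, p i ∈ Δ ×ˢ Finset.Icc 1 d) ∧ ∑ i, (s i : ℤ) * harmonicFreq n (p i) = 0 ∧
          (p (σ 3)).1 ≤ (p (σ 2)).1 + L ∧ (p (σ 2)).1 ≤ (p (σ 3)).1 + L := by
    intro σ p hp
    obtain ⟨hpZ, hclose⟩ := mem_filter.1 hp
    exact ⟨Fintype.mem_piFinset.1 (mem_filter.1 hpZ).1, (mem_filter.1 hpZ).2, hclose⟩
  calc ∑ p ∈ Z, ∏ i, c (p i).1
      ≤ ∑ σ : Equiv.Perm (Fin 4), ∑ p ∈ Z with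
          (p (σ 3)).1 ≤ (p (σ 2)).1 + L ∧ (p (σ 2)).1 ≤ (p (σ 3)).1 + L,
          (c (p (σ 2)).1 ^ 2 * c (p (σ 0)).1 ^ 2 + c (p (σ 3)).1 ^ 2 * c (p (σ 1)).1 ^ 2) / 2 := by
        refine sum_le_sum_sum_filter_of_exists (fun σ p => by positivity) fun p hp => ?_
        obtain ⟨hp, hsum⟩ := mem_filter.1 hp
        obtain ⟨σ, h23, h32⟩ := exists_perm_top_two_close hq hpos hgap hL s
          (fun i => (mem_product.1 (Fintype.mem_piFinset.1 hp i)).2) hsum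
        refine ⟨σ, ⟨by omega, by omega⟩, ?_⟩
        rw [← Equiv.prod_comp σ, Fin.prod_univ_four]
        nlinarith [sq_nonneg (c (p (σ 2)).1 * c (p (σ 0)).1 - c (p (σ 3)).1 * c (p (σ 1)).1)]
    _ ≤ ∑ _σ : Equiv.Perm (Fin 4), (B + B) / 2 := by
        refine sum_le_sum fun σ _ => ?_
        rw [← sum_div, sum_add_distrib]
        refine div_le_div_of_nonneg_right (add_le_add ?_ ?_) (by norm_num)
        · exact sum_sq_mul_sq_le_of_close hn s (a := σ 2) (a' := σ 3) (b := σ 0) (b' := σ 1)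
            (fun i hi => by obtain ⟨j, rfl⟩ := σ.surjective i; fin_cases j <;> simp at hi ⊢)
            Δ c d L _ (hZ σ)
        · exact sum_sq_mul_sq_le_of_close hn s (a := σ 3) (a' := σ 2) (b := σ 1) (b' := σ 0)
            (fun i hi => by obtain ⟨j, rfl⟩ := σ.surjective i; fin_cases j <;> simp at hi ⊢)
            Δ c d L _ fun p hp => (hZ σ p hp).imp_right (And.imp_right And.symm)
    _ = 24 * B := by
        rw [sum_const, card_univ, Fintype.card_perm, Fintype.card_fin, nsmul_eq_mul]
        norm_num [Nat.factorial]

theorem fourth_moment_bound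
    (q : ℝ) (hq : 1 < q) (n : ℕ → ℕ) (hpos : ∀ k, 0 < n k)
    (hgap : ∀ k, q * (n k : ℝ) ≤ (n (k + 1) : ℝ))
    (d : ℕ) (a : ℕ → ℝ) :
    ∃ C : ℝ, ∀ (Δ : Finset ℕ) (c : ℕ → ℝ), (∀ k ∈ Δ, 0 ≤ c k ∧ c k ≤ 1) →
      ∫ x in Set.Ico (0:ℝ) 1, (∑ k ∈ Δ, c k * trigPoly d a ((n k : ℝ) * x)) ^ 4
        ≤ C * (∑ k ∈ Δ, c k ^ 2) ^ 2 := by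
  obtain ⟨L, hL⟩ := pow_unbounded_of_one_lt (3 * d : ℝ) hq
  set A := ∑ j ∈ Finset.Icc 1 d, |a j|
  refine ⟨A ^ 4 * (24 * ((2 * L + 1) * d ^ 4 : ℕ)), fun Δ c hc => ?_⟩
  have hterm : ∀ s : Fin 4 → ℤˣ,
      ∀ p ∈ {p ∈ Fintype.piFinset (fun _ : Fin 4 => Δ ×ˢ Finset.Icc 1 d) |
        ∑ i, (s i : ℤ) * harmonicFreq n (p i) = 0},
      ∏ i, c (p i).1 * a (p i).2 ≤ A ^ 4 * ∏ i, c (p i).1 := by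
    intro s p hp
    have hp := fun i => mem_product.1 (Fintype.mem_piFinset.1 (mem_filter.1 hp).1 i)
    simpa using prod_mul_le_pow_card_mul_prod (fun i => (hc _ (hp i).1).1)
      fun i => single_le_sum (fun j _ => abs_nonneg (a j)) (hp i).2
  rw [integral_Ico_eq_integral_Ioc, ← intervalIntegral.integral_of_le zero_le_one]
  simp_rw [sum_mul_trigPoly_eq, integral_pow_sum_cos]
  calc _ ≤ (2 ^ 4 : ℝ)⁻¹ * ∑ _s : Fin 4 → ℤˣ,
          A ^ 4 * (24 * (((2 * L + 1) * d ^ 4 : ℕ) * (∑ k ∈ Δ, c k ^ 2) ^ 2)) := by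
        gcongr with s
        refine (sum_le_sum (hterm s)).trans ?_
        rw [← mul_sum]
        gcongr
        exact sum_prod_le_of_signed_sum_eq_zero hq hpos hgap hL.le Δ c s
    _ = A ^ 4 * (24 * ((2 * L + 1) * d ^ 4 : ℕ)) * (∑ k ∈ Δ, c k ^ 2) ^ 2 := by
        simp only [sum_const, card_univ, Fintype.card_fun, Fintype.card_units_int, Fintype.card_fin,
          nsmul_eq_mul]
        push_cast
        ring
end
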